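/- For any positive integer n and positive divisor p of n, the circulant determinant factors as Θ_n(x_0,...,x_{n-1}) = Π_{i=0}^{n/p - 1} Θ_p(y^(p)_{i,0}, ..., y^(p)_{i,p-1}), where y^(p)_{i,j} = Σ_{l=0}^{n/p - 1} ζ_n^{i(j+pl)} x_{j+pl}. -/
import Mathlib


open MvPolynomial Finset

/-- Cast `Fin`/`ZMod` equivalence. -/
def zmodFinEquiv (m : ℕ) [NeZero m] : ZMod m ≃ Fin m where
  toFun z := ⟨z.val, ZMod.val_lt z⟩
  invFun i := ((i : ℕ) : ZMod m)
  left_inv z := ZMod.natCast_zmod_val z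
  right_inv i := by ext; simp [ZMod.val_cast_of_lt i.isLt]

lemma pow_mod_eq {ζ : ℂ} {n : ℕ} (hζ : ζ ^ n = 1) (a : ℕ) : ζ ^ (a % n) = ζ ^ a := by
  conv_rhs => rw [← Nat.mod_add_div a n]
  rw [pow_add, pow_mul, hζ, one_pow, mul_one]

@[to_additive]
lemma prod_zmod {M : Type*} [CommMonoid M] (m : ℕ) [NeZero m] (g : ZMod m → M) :
    ∏ k : ZMod m, g k = ∏ k ∈ Finset.range m, g (k : ℕ) := by
  refine Finset.prod_nbij' (fun z => (z.val : ℕ)) (fun k => (k : ZMod m)) ?_ ?_ ?_ ?_ ?_ <;>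
    intro a _
  · exact Finset.mem_range.mpr (ZMod.val_lt a)
  · exact Finset.mem_univ _
  · exact ZMod.natCast_zmod_val a
  · exact ZMod.val_cast_of_lt (Finset.mem_range.mp ‹_›)
  · exact congrArg g (ZMod.natCast_zmod_val a).symm

@[to_additive sum_range_mul_eq]
lemma prod_range_mul_eq {M : Type*} [CommMonoid M] (a b : ℕ) (ha : 0 < a) (f : ℕ → M) :
    ∏ t ∈ Finset.range (a * b), f t
      = ∏ i ∈ Finset.range a, ∏ m ∈ Finset.range b, f (i + a * m) := by
  rw [← Finset.prod_product']
  refine Finset.prod_nbij' (fun t => (t % a, t / a)) (fun x => x.1 + a * x.2) ?_ ?_ ?_ ?_ ?_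
  · intro t ht
    rw [Finset.mem_range] at ht
    refine Finset.mem_product.mpr ⟨Finset.mem_range.mpr (Nat.mod_lt _ ha),
      Finset.mem_range.mpr ?_⟩
    rw [Nat.div_lt_iff_lt_mul ha]
    calc t < a * b := ht
    _ = b * a := Nat.mul_comm a b
  · rintro ⟨i, m⟩ hx
    rw [Finset.mem_product, Finset.mem_range, Finset.mem_range] at hx
    refine Finset.mem_range.mpr ?_
    calc i + a * m < a + a * m := by omega
    _ = a * (m + 1) := by ring
    _ ≤ a * b := Nat.mul_le_mul_left _ (by omega)
  · intro t _; exact Nat.mod_add_div t a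
  · rintro ⟨i, m⟩ hx
    rw [Finset.mem_product, Finset.mem_range, Finset.mem_range] at hx
    have h1 : (i + a * m) % a = i := by
      rw [Nat.add_mul_mod_self_left, Nat.mod_eq_of_lt hx.1]
    have h2 : (i + a * m) / a = m := by
      rw [Nat.add_mul_div_left _ _ ha, Nat.div_eq_of_lt hx.1, Nat.zero_add]
    simp [h1, h2]
  · intro t _
    simp [Nat.mod_add_div t a]

/-- General eigenvalue factorization of a circulant determinant over `ZMod m`,
mapped through a ring hom from `ℂ`. -/
lemma det_circulant_eq {R : Type*} [CommRing R] (m : ℕ) [NeZero m]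
    (f : ℂ →+* R) (hf : ∀ c : ℂ, c ≠ 0 → IsUnit (f c))
    (ζ : ℂ) (hζ : IsPrimitiveRoot ζ m) (v : ZMod m → R) :
    (Matrix.circulant v).det
      = ∏ k : ZMod m, ∑ j : ZMod m, f (ζ ^ (j * k).val) * v j := by
  have hζ1 : ζ ^ m = 1 := hζ.pow_eq_one
  set E : ZMod m → ℂ := fun z => ζ ^ z.val with hE
  have hEadd : ∀ a b : ZMod m, E (a + b) = E a * E b := by
    intro a b
    simp only [hE, ZMod.val_add, pow_mod_eq hζ1, pow_add]
  set Vc : Matrix (ZMod m) (ZMod m) ℂ := Matrix.of fun j k => E (j * k) with hVc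
  set V : Matrix (ZMod m) (ZMod m) R := Vc.map f with hV
  set lam : ZMod m → R := fun k => ∑ d : ZMod m, f (E (d * (-k))) * v d with hlam
  have key : Matrix.circulant v * V = V * Matrix.diagonal lam := by
    ext i k
    rw [Matrix.mul_diagonal, Matrix.mul_apply]
    calc ∑ j : ZMod m, Matrix.circulant v i j * V j k
        = ∑ d : ZMod m, v d * (f (E (i * k)) * f (E (d * (-k)))) := by
          refine Fintype.sum_equiv (Equiv.subLeft i) _ _ ?_
          intro d
          show Matrix.circulant v i d * V d k
            = v (i - d) * (f (E (i * k)) * f (E ((i - d) * (-k))))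
          rw [Matrix.circulant_apply]
          show v (i - d) * f (E (d * k)) = _
          have h2 : d * k = i * k + (i - d) * (-k) := by ring
          rw [h2, hEadd, map_mul]
      _ = V i k * lam k := by
          rw [hlam, Finset.mul_sum]
          refine Finset.sum_congr rfl fun d _ => ?_
          show v d * _ = f (E (i * k)) * (f (E (d * -k)) * v d)
          ring
  have hVcdet : Vc.det ≠ 0 := by
    rw [← Matrix.det_submatrix_equiv_self (zmodFinEquiv m).symm Vc]
    have : Vc.submatrix (zmodFinEquiv m).symm (zmodFinEquiv m).symm
        = (Matrix.vandermonde fun a : Fin m => ζ ^ (a : ℕ)).transpose := by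
      ext a b
      show ζ ^ ((((a : ℕ) : ZMod m) * ((b : ℕ) : ZMod m)).val) = (ζ ^ (b : ℕ)) ^ (a : ℕ)
      rw [← Nat.cast_mul, ZMod.val_natCast, pow_mod_eq hζ1, ← pow_mul, Nat.mul_comm]
    rw [this, Matrix.det_transpose]
    rw [Matrix.det_vandermonde_ne_zero_iff]
    intro a b hab
    exact Fin.ext (hζ.pow_inj a.isLt b.isLt hab)
  have hVunit : IsUnit V.det := by
    show IsUnit (Vc.map ⇑f).det
    rw [← RingHom.mapMatrix_apply, ← RingHom.map_det]
    exact hf _ hVcdet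
  have hdet : V.det * (Matrix.circulant v).det = V.det * (Matrix.diagonal lam).det := by
    rw [mul_comm (V.det) _, ← Matrix.det_mul, key, Matrix.det_mul]
  have h3 : (Matrix.circulant v).det = ∏ k : ZMod m, lam k := by
    rw [hVunit.mul_left_cancel hdet, Matrix.det_diagonal]
  rw [h3]
  exact Fintype.prod_equiv (Equiv.neg (ZMod m)) _ _ fun k => rfl



/-- The variable `y^(p)_{i,j} = ∑_{l<n/p} ζ^{i(j+pl)} x_{j+pl}`. -/
noncomputable def ypVar (n p : ℕ) [NeZero n] (ζ : ℂ) (i j : ℕ) :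
    MvPolynomial (ZMod n) ℂ :=
  ∑ l ∈ Finset.range (n / p), C (ζ ^ (i * (j + p * l))) * X ((j + p * l : ℕ) : ZMod n)

/-- The circulant determinant of order `p` with first column `a_0, …, a_{p-1}`. -/
def thetaCirc {R : Type*} [CommRing R] (p : ℕ) (a : ℕ → R) : R :=
  (Matrix.circulant fun j : Fin p => a (j : ℕ)).det


lemma thetaCirc_eq_zmod {R : Type*} [CommRing R] (p : ℕ) [NeZero p] (a : ℕ → R) :
    thetaCirc p a = (Matrix.circulant fun z : ZMod p => a z.val).det := by
  cases p with
  | zero => exact absurd rfl (NeZero.ne 0)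
  | succ q => rfl

/-- Factorization of the circulant determinant:
`Θ_n(x) = ∏_{i<n/p} Θ_p(y^(p)_{i,0}, …, y^(p)_{i,p-1})`. -/
theorem stmt13 (n p : ℕ) [NeZero n] [NeZero p] (hpn : p ∣ n)
    (ζ : ℂ) (hζ : IsPrimitiveRoot ζ n) :
    (Matrix.circulant (X : ZMod n → MvPolynomial (ZMod n) ℂ)).det
      = ∏ i ∈ Finset.range (n / p), thetaCirc p (fun j => ypVar n p ζ i j) := by
  have hp : 0 < p := Nat.pos_of_ne_zero (NeZero.ne p)
  have hn : 0 < n := Nat.pos_of_ne_zero (NeZero.ne n)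
  obtain ⟨q, hnpq⟩ : ∃ q, n = p * q := hpn
  have hq : n / p = q := by rw [hnpq]; exact Nat.mul_div_cancel_left q hp
  have hq0 : 0 < q := by
    rcases Nat.eq_zero_or_pos q with h | h
    · exact absurd (hnpq.trans (by rw [h, Nat.mul_zero])) hn.ne'
    · exact h
  have hζ1 : ζ ^ n = 1 := hζ.pow_eq_one
  have hC : ∀ c : ℂ, c ≠ 0 → IsUnit ((C : ℂ →+* MvPolynomial (ZMod n) ℂ) c) :=
    fun c hc => (isUnit_iff_ne_zero.mpr hc).map C
  have hζp : IsPrimitiveRoot (ζ ^ q) p := hζ.pow hn (by rw [hnpq, Nat.mul_comm])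
  set L : ℕ → MvPolynomial (ZMod n) ℂ :=
    fun k => ∑ t ∈ Finset.range n, C (ζ ^ (t * k)) * X ((t : ℕ) : ZMod n) with hL
  have lhs : (Matrix.circulant (X : ZMod n → MvPolynomial (ZMod n) ℂ)).det
      = ∏ k ∈ Finset.range n, L k := by
    rw [det_circulant_eq n (C : ℂ →+* MvPolynomial (ZMod n) ℂ) hC ζ hζ X,
      prod_zmod n (fun k : ZMod n => ∑ j : ZMod n, C (ζ ^ (j * k).val) * X j)]
    refine Finset.prod_congr rfl fun k hk => ?_
    rw [sum_zmod n (fun j : ZMod n => C (ζ ^ (j * ((k : ℕ) : ZMod n)).val) * X j), hL]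
    refine Finset.sum_congr rfl fun j hj => ?_
    rw [← Nat.cast_mul, ZMod.val_natCast, pow_mod_eq hζ1]
  have rhs : ∀ i, thetaCirc p (fun j => ypVar n p ζ i j)
      = ∏ m ∈ Finset.range p, L (i + q * m) := by
    intro i
    rw [thetaCirc_eq_zmod,
      det_circulant_eq p (C : ℂ →+* MvPolynomial (ZMod n) ℂ) hC (ζ ^ q) hζp _,
      prod_zmod p]
    refine Finset.prod_congr rfl fun m hm => ?_
    rw [sum_zmod p, hL]
    beta_reduce
    rw [show Finset.range n = Finset.range (p * q) from by rw [← hnpq],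
      sum_range_mul_eq p q hp]
    refine Finset.sum_congr rfl fun j hj => ?_
    rw [ZMod.val_cast_of_lt (Finset.mem_range.mp hj)]
    rw [ypVar, hq, Finset.mul_sum]
    refine Finset.sum_congr rfl fun l hl => ?_
    rw [← mul_assoc, ← map_mul, ← pow_mul, ← Nat.cast_mul, ZMod.val_natCast, ← pow_add]
    have h1 : p * (j * m / p) + (j * m) % p = j * m := Nat.div_add_mod _ _
    have hnat : (j + p * l) * (i + q * m)
        = (q * ((j * m) % p) + i * (j + p * l)) + n * (j * m / p + l * m) := by
      calc (j + p * l) * (i + q * m)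
          = i * (j + p * l) + q * (j * m) + (p * q) * (l * m) := by ring
        _ = i * (j + p * l) + q * (p * (j * m / p) + (j * m) % p) + (p * q) * (l * m) := by
            rw [h1]
        _ = (q * ((j * m) % p) + i * (j + p * l)) + (p * q) * (j * m / p + l * m) := by ring
        _ = _ := by rw [← hnpq]
    have hexp : ζ ^ (q * ((j * m) % p) + i * (j + p * l))
        = ζ ^ ((j + p * l) * (i + q * m)) := by
      conv_rhs => rw [hnat, pow_add, pow_mul, hζ1, one_pow, mul_one]
    rw [hexp]
  rw [hq, lhs]
  have hn' : n = q * p := by rw [hnpq, Nat.mul_comm]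
  rw [show Finset.range n = Finset.range (q * p) from by rw [← hn'],
    prod_range_mul_eq q p hq0 L]
  exact Finset.prod_congr rfl fun i _ => (rhs i).symm
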